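/- arXiv:2001.09187 — 2 statements merged into one kernel-verified Lean document; each statement's English description precedes it below -/
import Mathlib

section
/- Let C, Ĉ ∈ ℝ^{n×n} be SPSD matrices such that C − Ĉ is also SPSD. Then W₂(N(0,C), N(0,Ĉ)) ≤ trace(C − Ĉ)^{1/2}; equivalently, the infimum over all couplings H of N(0,C) and N(0,Ĉ) of ∫ ‖x − y‖₂² dH(x,y) is at most trace(C − Ĉ). -/
/-! Couple `N(0, C)` and `N(0, Ĉ)` synchronously: push one standard Gaussian `x` forward under
`x ↦ (S x, T x)` with `S = C^{1/2}`, `T = Ĉ^{1/2}`. The cost of this coupling is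
`E ‖(S - T) x‖² = tr ((S - T)²)`. The square root is operator monotone, so `S - T` is positive
semidefinite, and then `tr (S² - T²) - tr ((S - T)²) = 2 tr ((S - T) T) ≥ 0`, the trace of a
product of two positive semidefinite matrices. -/

open MeasureTheory Matrix
open scoped ENNReal Classical

/-- The standard Gaussian measure on `ι → ℝ`. -/
noncomputable def stdGaussian (ι : Type*) [Fintype ι] : Measure (ι → ℝ) :=
  Measure.pi fun _ => ProbabilityTheory.gaussianReal 0 1

/-- The unique SPSD square root of an SPSD matrix (junk value `0` otherwise). -/
noncomputable def psdSqrt {ι : Type*} [Fintype ι] [DecidableEq ι] (M : Matrix ι ι ℝ) :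
    Matrix ι ι ℝ :=
  if h : M.PosSemidef then
    (h.1.eigenvectorUnitary : Matrix ι ι ℝ) *
      diagonal ((RCLike.ofReal : ℝ → ℝ) ∘ Real.sqrt ∘ h.1.eigenvalues) *
      (star h.1.eigenvectorUnitary : Matrix ι ι ℝ)
  else 0

/-- The centered Gaussian measure `N(0, C)` on `ι → ℝ` with covariance matrix `C`. -/
noncomputable def gaussianOf {ι : Type*} [Fintype ι] [DecidableEq ι] (C : Matrix ι ι ℝ) :
    Measure (ι → ℝ) :=
  (stdGaussian ι).map (fun x => psdSqrt C *ᵥ x)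

/-- `H` is a coupling of `ν` and `νhat`. -/
def IsCoupling {E F : Type*} [MeasurableSpace E] [MeasurableSpace F]
    (H : Measure (E × F)) (ν : Measure E) (νhat : Measure F) : Prop :=
  H.map Prod.fst = ν ∧ H.map Prod.snd = νhat

/-- The squared Wasserstein-2 distance (w.r.t. the Euclidean norm) between two measures
on `ι → ℝ`: the infimum over all couplings of the integral of the squared Euclidean
distance. -/
noncomputable def wass2sq {ι : Type*} [Fintype ι] (ν νhat : Measure (ι → ℝ)) : ℝ≥0∞ :=
  ⨅ (H : Measure ((ι → ℝ) × (ι → ℝ))) (_ : IsCoupling H ν νhat),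
    ∫⁻ p, ENNReal.ofReal (∑ i, (p.1 i - p.2 i) ^ 2) ∂H

namespace Matrix.PosSemidef

variable {ι : Type*} [Fintype ι] [DecidableEq ι] {M : Matrix ι ι ℝ}

open scoped MatrixOrder

lemma psdSqrt_eq_cfc (h : M.PosSemidef) : psdSqrt M = cfc Real.sqrt M := by
  rw [h.1.cfc_eq, IsHermitian.cfc, Unitary.conjStarAlgAut_apply, psdSqrt, dif_pos h]

lemma posSemidef_psdSqrt (h : M.PosSemidef) : (psdSqrt M).PosSemidef := by
  rw [← nonneg_iff_posSemidef, h.psdSqrt_eq_cfc]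
  exact cfc_nonneg fun x _ => Real.sqrt_nonneg x

lemma psdSqrt_mul_self (h : M.PosSemidef) : psdSqrt M * psdSqrt M = M := by
  have hM : 0 ≤ M := nonneg_iff_posSemidef.mpr h
  rw [h.psdSqrt_eq_cfc, ← cfc_mul Real.sqrt Real.sqrt M]
  conv_rhs => rw [← cfc_id' ℝ M]
  exact cfc_congr fun x hx => Real.mul_self_sqrt (spectrum_nonneg_of_nonneg hM hx)

end Matrix.PosSemidef

namespace Matrix

variable {ι : Type*} [Fintype ι] {P Q S T : Matrix ι ι ℝ}

lemma PosSemidef.trace_mul_nonneg (hP : P.PosSemidef) (hQ : Q.PosSemidef) :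
    0 ≤ (P * Q).trace := by
  classical
  have hR : (psdSqrt Q)ᴴ = psdSqrt Q := hQ.posSemidef_psdSqrt.1
  rw [← hQ.psdSqrt_mul_self, ← Matrix.mul_assoc, trace_mul_comm, ← Matrix.mul_assoc]
  nth_rw 2 [← hR]
  exact (hP.mul_mul_conjTranspose_same _).trace_nonneg

lemma PosSemidef.sub_of_mul_self_sub_mul_self (hS : S.PosSemidef) (hT : T.PosSemidef)
    (h : (S * S - T * T).PosSemidef) : (S - T).PosSemidef := by
  classical
  have hA : (S - T).IsHermitian := hS.1.sub hT.1
  refine hA.posSemidef_iff_eigenvalues_nonneg.mpr fun i => ?_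
  set v : ι → ℝ := ⇑(hA.eigenvectorBasis i)
  set lam := hA.eigenvalues i
  have hv : (S - T) *ᵥ v = lam • v := hA.mulVec_eigenvectorBasis i
  have hv0 : v ≠ 0 :=
    (WithLp.ofLp_eq_zero (p := 2)).not.mpr (hA.eigenvectorBasis.orthonormal.ne_zero i)
  have hquad : star v ⬝ᵥ ((S * S - T * T) *ᵥ v) =
      lam * (star v ⬝ᵥ (S *ᵥ v) + star v ⬝ᵥ (T *ᵥ v)) := by
    have hsymm : star v ᵥ* (S - T) = lam • star v := by
      rw [← hA.eq, ← star_mulVec, hv, star_smul, star_trivial]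
    rw [show S * S - T * T = S * (S - T) + (S - T) * T by noncomm_ring, add_mulVec,
      ← mulVec_mulVec, ← mulVec_mulVec, dotProduct_add, hv, mulVec_smul, dotProduct_smul,
      dotProduct_mulVec _ (S - T), hsymm, smul_dotProduct, smul_eq_mul, smul_eq_mul, mul_add]
  change 0 ≤ lam
  by_contra! hneg
  have hSv := hS.dotProduct_mulVec_nonneg v
  have hTv := hT.dotProduct_mulVec_nonneg v
  have hdiff := h.dotProduct_mulVec_nonneg v
  have hS0 : S *ᵥ v = 0 := (hS.dotProduct_mulVec_zero_iff v).mp (by nlinarith)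
  have hT0 : T *ᵥ v = 0 := (hT.dotProduct_mulVec_zero_iff v).mp (by nlinarith)
  have hlam : lam • v = 0 := by rw [← hv, sub_mulVec, hS0, hT0, sub_zero]
  exact hv0 ((smul_eq_zero.mp hlam).resolve_left hneg.ne)

lemma trace_sub_mul_transpose_sub_le (hS : S.PosSemidef) (hT : T.PosSemidef)
    (h : (S * S - T * T).PosSemidef) :
    ((S - T) * (S - T)ᵀ).trace ≤ (S * S - T * T).trace := by
  have hA := hS.sub_of_mul_self_sub_mul_self hT h
  have hAT : (S - T)ᵀ = S - T := by simpa using hA.1.eq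
  rw [hAT, show S * S - T * T = (S - T) * (S - T) + ((S - T) * T + T * (S - T)) by noncomm_ring,
    trace_add, trace_add, trace_mul_comm T]
  linarith [hA.trace_mul_nonneg hT]

end Matrix

section stdGaussian

open ProbabilityTheory (gaussianReal memLp_id_gaussianReal integral_id_gaussianReal
  variance_of_integral_eq_zero variance_sum_pi variance_const_mul)

variable {ι κ : Type*} [Fintype ι] [Fintype κ]

instance : IsProbabilityMeasure (stdGaussian ι) := by
  unfold stdGaussian; infer_instance

lemma memLp_eval_stdGaussian (i : ι) : MemLp (fun x => x i) 2 (stdGaussian ι) :=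
  (memLp_id_gaussianReal 2).comp_measurePreserving (measurePreserving_eval _ i)

lemma memLp_dotProduct_stdGaussian (a : ι → ℝ) :
    MemLp (fun x => a ⬝ᵥ x) 2 (stdGaussian ι) :=
  memLp_finsetSum _ fun i _ => (memLp_eval_stdGaussian i).const_mul (a i)

lemma integral_eval_stdGaussian (i : ι) : ∫ x, x i ∂stdGaussian ι = 0 :=
  (integral_comp_eval (f := id) (μ := fun _ => gaussianReal 0 1) aestronglyMeasurable_id).trans
    integral_id_gaussianReal

lemma integral_dotProduct_stdGaussian (a : ι → ℝ) : ∫ x, a ⬝ᵥ x ∂stdGaussian ι = 0 := by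
  simp only [dotProduct]
  rw [integral_finsetSum _ fun i _ =>
    ((memLp_eval_stdGaussian i).integrable one_le_two).const_mul (a i)]
  refine Finset.sum_eq_zero fun i _ => ?_
  rw [integral_const_mul, integral_eval_stdGaussian, mul_zero]

lemma integral_dotProduct_sq_stdGaussian (a : ι → ℝ) :
    ∫ x, (a ⬝ᵥ x) ^ 2 ∂stdGaussian ι = a ⬝ᵥ a := by
  rw [← variance_of_integral_eq_zero (memLp_dotProduct_stdGaussian a).aemeasurable
    (integral_dotProduct_stdGaussian a)]
  have hsum : (fun x : ι → ℝ => a ⬝ᵥ x) = ∑ i, fun x => a i * x i := by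
    ext x; simp [dotProduct]
  rw [stdGaussian, hsum, variance_sum_pi (X := fun i t => a i * t) fun i =>
    (memLp_id_gaussianReal 2).const_mul (a i)]
  exact Finset.sum_congr rfl fun i _ => (variance_const_mul (a i) id _).trans (by simp [sq])

lemma integral_sum_mulVec_sq_stdGaussian (M : Matrix κ ι ℝ) :
    ∫ x, ∑ i, (M *ᵥ x) i ^ 2 ∂stdGaussian ι = (M * Mᵀ).trace := by
  rw [integral_finsetSum (f := fun i x => (M *ᵥ x) i ^ 2) _ fun i _ =>
    (memLp_dotProduct_stdGaussian (M i)).integrable_sq]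
  exact Finset.sum_congr rfl fun i _ => integral_dotProduct_sq_stdGaussian (M i)

lemma lintegral_sum_mulVec_sq_stdGaussian (M : Matrix κ ι ℝ) :
    ∫⁻ x, ENNReal.ofReal (∑ i, (M *ᵥ x) i ^ 2) ∂stdGaussian ι = ENNReal.ofReal (M * Mᵀ).trace := by
  rw [← integral_sum_mulVec_sq_stdGaussian, ofReal_integral_eq_lintegral_ofReal]
  · exact integrable_finsetSum _ fun i _ => (memLp_dotProduct_stdGaussian (M i)).integrable_sq
  · exact Filter.Eventually.of_forall fun x => by positivity

end stdGaussian

lemma wass2sq_map_le_lintegral {ι Ω : Type*} [Fintype ι] [MeasurableSpace Ω] (μ : Measure Ω)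
    {f g : Ω → ι → ℝ} (hf : Measurable f) (hg : Measurable g) :
    wass2sq (μ.map f) (μ.map g) ≤ ∫⁻ ω, ENNReal.ofReal (∑ i, (f ω i - g ω i) ^ 2) ∂μ := by
  have hfg : Measurable fun ω => (f ω, g ω) := hf.prodMk hg
  have hcoup : IsCoupling (μ.map fun ω => (f ω, g ω)) (μ.map f) (μ.map g) :=
    ⟨Measure.map_map measurable_fst hfg, Measure.map_map measurable_snd hfg⟩
  calc wass2sq (μ.map f) (μ.map g)
      ≤ ∫⁻ p, ENNReal.ofReal (∑ i, (p.1 i - p.2 i) ^ 2) ∂μ.map fun ω => (f ω, g ω) :=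
        iInf₂_le (f := fun H (_ : IsCoupling H _ _) => _) _ hcoup
    _ = _ := lintegral_map (by fun_prop) hfg

/-- if `C`, `Ĉ` and `C - Ĉ` are SPSD then
`W₂(N(0,C), N(0,Ĉ))² ≤ trace (C - Ĉ)`. -/
theorem stmt0 {n : ℕ} (C Chat : Matrix (Fin n) (Fin n) ℝ)
    (hC : C.PosSemidef) (hChat : Chat.PosSemidef) (hdiff : (C - Chat).PosSemidef) :
    wass2sq (gaussianOf C) (gaussianOf Chat) ≤ ENNReal.ofReal (C - Chat).trace := by
  set S := psdSqrt C
  set T := psdSqrt Chat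
  have hsub : (S * S - T * T).PosSemidef := by
    rwa [hC.psdSqrt_mul_self, hChat.psdSqrt_mul_self]
  calc wass2sq (gaussianOf C) (gaussianOf Chat)
      ≤ ∫⁻ x, ENNReal.ofReal (∑ i, ((S *ᵥ x) i - (T *ᵥ x) i) ^ 2) ∂stdGaussian (Fin n) :=
        wass2sq_map_le_lintegral _ (by fun_prop) (by fun_prop)
    _ = ENNReal.ofReal ((S - T) * (S - T)ᵀ).trace := by
        simp only [← lintegral_sum_mulVec_sq_stdGaussian, sub_mulVec, Pi.sub_apply]
    _ ≤ ENNReal.ofReal (C - Chat).trace := by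
        grw [trace_sub_mul_transpose_sub_le hC.posSemidef_psdSqrt hChat.posSemidef_psdSqrt hsub,
          hC.psdSqrt_mul_self, hChat.psdSqrt_mul_self]
end

section
/- Let A, E ∈ ℝ^{n×n} be symmetric matrices such that Ã := A − E is SPSD and ‖E‖₂ ≤ δ for some δ > 0. Let I ⊆ {1,…,n} be such that A(I,I) is invertible, suppose ρ := δ ‖A(I,I)^{-1}‖₂ < 1, and set W := A(I,I)^{-1} A(I,I^c). Then Ã(I,I) is invertible and the Schur complements S := A(I^c,I^c) − A(I^c,I) A(I,I)^{-1} A(I,I^c) and S̃ := Ã(I^c,I^c) − Ã(I^c,I) Ã(I,I)^{-1} Ã(I,I^c) satisfy ‖S − S̃‖₂ ≤ δ (1 + ‖W‖₂)² / (1 − ρ). -/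
/-!
Write `B = A(I,I)`, `C = A(I,Iᶜ)`, `W = B⁻¹ C` and `G`, `F`, `H` for the corresponding blocks
of `E`. Since `C - F = (B - G) W - D` with `D = F - G W`, and `B`, `B - G` are symmetric,
`S - S̃ = Dᵀ (B - G)⁻¹ D + (H + Wᵀ G W - Wᵀ F - Fᵀ W)`.
The second term has norm at most `δ (1 + ‖W‖)²` and `‖D‖ ≤ δ (1 + ‖W‖)`. The Neumann series for
`B - G = B (1 - B⁻¹ G)` gives `‖(B - G)⁻¹‖ ≤ ‖B⁻¹‖ / (1 - ρ)`, so the first term is at most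
`δ (1 + ‖W‖)² ρ / (1 - ρ)`, and the two bounds add up to `δ (1 + ‖W‖)² / (1 - ρ)`.
-/

open Matrix
open scoped Classical Matrix.Norms.L2Operator

def subm {n : ℕ} (A : Matrix (Fin n) (Fin n) ℝ) (I J : Finset (Fin n)) :
    Matrix I J ℝ :=
  A.submatrix Subtype.val Subtype.val

def colsOf {n : ℕ} (A : Matrix (Fin n) (Fin n) ℝ) (I : Finset (Fin n)) :
    Matrix (Fin n) I ℝ :=
  A.submatrix id Subtype.val

noncomputable def crossApprox {n : ℕ} (A : Matrix (Fin n) (Fin n) ℝ) (I : Finset (Fin n)) :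
    Matrix (Fin n) (Fin n) ℝ :=
  colsOf A I * (subm A I I)⁻¹ * (colsOf A I)ᵀ

namespace Matrix

section Algebra

variable {m k R : Type*} [Fintype m] [DecidableEq m] [CommRing R]

lemma schur_sub_schur_eq {B G : Matrix m m R} (C F : Matrix m k R) (K H : Matrix k k R)
    (hB : B.IsSymm) (hG : G.IsSymm) (hBu : IsUnit B) (hBGu : IsUnit (B - G)) :
    (K - Cᵀ * B⁻¹ * C) - ((K - H) - (C - F)ᵀ * (B - G)⁻¹ * (C - F)) =
      (F - G * (B⁻¹ * C))ᵀ * (B - G)⁻¹ * (F - G * (B⁻¹ * C)) +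
        (H + (B⁻¹ * C)ᵀ * G * (B⁻¹ * C) - (B⁻¹ * C)ᵀ * F - Fᵀ * (B⁻¹ * C)) := by
  set W := B⁻¹ * C
  set N := (B - G)⁻¹
  have hBW : B * W = C := by
    rw [← Matrix.mul_assoc, mul_nonsing_inv _ ((isUnit_iff_isUnit_det B).mp hBu), Matrix.one_mul]
  have hCB : Cᵀ * B⁻¹ = Wᵀ := by rw [transpose_mul, transpose_nonsing_inv, hB.eq]
  set P := (B - G) * W with hP
  set D := F - G * W with hD
  clear_value P D
  have hPN : Pᵀ * N = Wᵀ := by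
    rw [hP, transpose_mul, transpose_sub, hB.eq, hG.eq, Matrix.mul_assoc,
      mul_nonsing_inv _ ((isUnit_iff_isUnit_det _).mp hBGu), Matrix.mul_one]
  have hNP : N * P = W := by
    rw [hP, ← Matrix.mul_assoc, nonsing_inv_mul _ ((isUnit_iff_isUnit_det _).mp hBGu),
      Matrix.one_mul]
  have hexp : (P - D)ᵀ * N * (P - D) = Wᵀ * P - Wᵀ * D - Dᵀ * W + Dᵀ * N * D := by
    rw [transpose_sub, Matrix.sub_mul, Matrix.sub_mul, Matrix.mul_sub, Matrix.mul_sub, hPN,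
      Matrix.mul_assoc Dᵀ N P, hNP]
    abel
  have hCF : C - F = P - D := by
    rw [hP, hD, Matrix.sub_mul, hBW]; abel
  rw [hCF, hCB, hexp, ← hBW, hP, hD]
  simp only [transpose_sub, transpose_mul, hG.eq, Matrix.sub_mul, Matrix.mul_sub, Matrix.mul_assoc]
  abel

end Algebra

variable {l m n k : Type*} [Fintype l] [Fintype m] [Fintype n] [Fintype k]
  [DecidableEq l] [DecidableEq m] [DecidableEq n] [DecidableEq k]

lemma l2_opNorm_transpose (M : Matrix m n ℝ) : ‖Mᵀ‖ = ‖M‖ := by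
  rw [← conjTranspose_eq_transpose_of_trivial, l2_opNorm_conjTranspose]

lemma l2_opNorm_one_le : ‖(1 : Matrix m m ℝ)‖ ≤ 1 := by
  rw [cstar_norm_def, map_one]
  exact ContinuousLinearMap.norm_id_le

lemma l2_opNorm_one_submatrix_le {e : l → m} (he : Function.Injective e) :
    ‖(1 : Matrix m m ℝ).submatrix e id‖ ≤ 1 := by
  set P := (1 : Matrix m m ℝ).submatrix e id
  have hPP : Pᴴᴴ * Pᴴ = 1 := by
    rw [conjTranspose_conjTranspose, conjTranspose_eq_transpose_of_trivial, transpose_submatrix,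
      transpose_one, ← submatrix_mul _ _ _ _ _ Function.bijective_id, mul_one,
      submatrix_one _ he]
  have hP : ‖P‖ * ‖P‖ ≤ 1 := by
    rw [← l2_opNorm_conjTranspose P, ← l2_opNorm_conjTranspose_mul_self, hPP]
    exact l2_opNorm_one_le
  nlinarith [norm_nonneg P]

lemma l2_opNorm_submatrix_le (M : Matrix m n ℝ) {e : l → m} {f : k → n}
    (he : Function.Injective e) (hf : Function.Injective f) : ‖M.submatrix e f‖ ≤ ‖M‖ := by
  set P := (1 : Matrix m m ℝ).submatrix e id
  set Q := (1 : Matrix n n ℝ).submatrix f id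
  have hfac : M.submatrix e f = P * M * Qᵀ := by
    ext i j
    simp [P, Q, mul_apply, one_apply]
  calc ‖M.submatrix e f‖ ≤ ‖P‖ * ‖M‖ * ‖Qᵀ‖ := by
        rw [hfac]
        exact (l2_opNorm_mul _ _).trans (by gcongr; exact l2_opNorm_mul _ _)
    _ ≤ 1 * ‖M‖ * 1 := by
        rw [l2_opNorm_transpose]
        gcongr
        exacts [l2_opNorm_one_submatrix_le he, l2_opNorm_one_submatrix_le hf]
    _ = ‖M‖ := by ring

lemma l2_opNorm_inv_one_sub_le {X : Matrix m m ℝ} (hX : ‖X‖ < 1) :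
    ‖(1 - X)⁻¹‖ ≤ (1 - ‖X‖)⁻¹ := by
  rw [nonsing_inv_eq_ringInverse, ← geom_series_eq_inverse X hX]
  linarith [tsum_geometric_le_of_norm_lt_one X hX, l2_opNorm_one_le (m := m)]

lemma isUnit_sub_and_l2_opNorm_inv_sub_le {B G : Matrix m m ℝ} {δ : ℝ} (hB : IsUnit B)
    (hG : ‖G‖ ≤ δ) (hρ : δ * ‖B⁻¹‖ < 1) :
    IsUnit (B - G) ∧ ‖(B - G)⁻¹‖ ≤ ‖B⁻¹‖ / (1 - δ * ‖B⁻¹‖) := by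
  have hX : ‖B⁻¹ * G‖ ≤ δ * ‖B⁻¹‖ := by
    rw [mul_comm δ]
    exact (l2_opNorm_mul _ _).trans (by gcongr)
  have hfac : B - G = B * (1 - B⁻¹ * G) := by
    rw [Matrix.mul_sub, Matrix.mul_one, ← Matrix.mul_assoc,
      mul_nonsing_inv _ ((isUnit_iff_isUnit_det B).mp hB), Matrix.one_mul]
  have hX1 : ‖B⁻¹ * G‖ < 1 := hX.trans_lt hρ
  refine ⟨hfac ▸ hB.mul (isUnit_one_sub_of_norm_lt_one hX1), ?_⟩
  calc ‖(B - G)⁻¹‖ ≤ ‖(1 - B⁻¹ * G)⁻¹‖ * ‖B⁻¹‖ := by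
        rw [hfac, Matrix.mul_inv_rev]
        exact l2_opNorm_mul _ _
    _ ≤ (1 - δ * ‖B⁻¹‖)⁻¹ * ‖B⁻¹‖ := by
        gcongr
        refine (l2_opNorm_inv_one_sub_le hX1).trans ?_
        gcongr
    _ = ‖B⁻¹‖ / (1 - δ * ‖B⁻¹‖) := inv_mul_eq_div _ _

lemma l2_opNorm_transpose_mul_mul_le (D : Matrix m k ℝ) (N : Matrix m m ℝ) :
    ‖Dᵀ * N * D‖ ≤ ‖N‖ * ‖D‖ ^ 2 := by
  calc ‖Dᵀ * N * D‖ ≤ ‖Dᵀ‖ * ‖N‖ * ‖D‖ :=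
        (l2_opNorm_mul _ _).trans (by gcongr; exact l2_opNorm_mul _ _)
    _ = ‖N‖ * ‖D‖ ^ 2 := by rw [l2_opNorm_transpose]; ring

lemma l2_opNorm_sub_mul_le {G : Matrix m m ℝ} {F : Matrix m k ℝ} {δ : ℝ} (W : Matrix m k ℝ)
    (hG : ‖G‖ ≤ δ) (hF : ‖F‖ ≤ δ) : ‖F - G * W‖ ≤ δ * (1 + ‖W‖) := by
  calc ‖F - G * W‖ ≤ ‖F‖ + ‖G‖ * ‖W‖ :=
        (norm_sub_le _ _).trans (by gcongr; exact l2_opNorm_mul _ _)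
    _ ≤ δ + δ * ‖W‖ := by gcongr
    _ = δ * (1 + ‖W‖) := by ring

lemma l2_opNorm_add_quadratic_le {G : Matrix m m ℝ} {F : Matrix m k ℝ} {H : Matrix k k ℝ}
    {δ : ℝ} (W : Matrix m k ℝ) (hG : ‖G‖ ≤ δ) (hF : ‖F‖ ≤ δ) (hH : ‖H‖ ≤ δ) :
    ‖H + Wᵀ * G * W - Wᵀ * F - Fᵀ * W‖ ≤ δ * (1 + ‖W‖) ^ 2 := by
  calc ‖H + Wᵀ * G * W - Wᵀ * F - Fᵀ * W‖
      ≤ ‖H‖ + ‖G‖ * ‖W‖ ^ 2 + ‖W‖ * ‖F‖ + ‖F‖ * ‖W‖ := by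
        refine (norm_sub_le _ _).trans (add_le_add ((norm_sub_le _ _).trans
          (add_le_add ((norm_add_le _ _).trans (add_le_add le_rfl ?_)) ?_)) ?_)
        · exact l2_opNorm_transpose_mul_mul_le W G
        · exact (l2_opNorm_mul _ _).trans_eq (by rw [l2_opNorm_transpose])
        · exact (l2_opNorm_mul _ _).trans_eq (by rw [l2_opNorm_transpose])
    _ ≤ δ + δ * ‖W‖ ^ 2 + ‖W‖ * δ + δ * ‖W‖ := by gcongr
    _ = δ * (1 + ‖W‖) ^ 2 := by ring

theorem isUnit_sub_and_l2_opNorm_schur_sub_schur_le {B G : Matrix m m ℝ} {C F : Matrix m k ℝ}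
    (K : Matrix k k ℝ) {H : Matrix k k ℝ} {δ : ℝ} (hB : B.IsSymm) (hG : G.IsSymm) (hBu : IsUnit B)
    (hGδ : ‖G‖ ≤ δ) (hFδ : ‖F‖ ≤ δ) (hHδ : ‖H‖ ≤ δ) (hρ : δ * ‖B⁻¹‖ < 1) :
    IsUnit (B - G) ∧
      ‖(K - Cᵀ * B⁻¹ * C) - ((K - H) - (C - F)ᵀ * (B - G)⁻¹ * (C - F))‖ ≤
        δ * (1 + ‖B⁻¹ * C‖) ^ 2 / (1 - δ * ‖B⁻¹‖) := by
  obtain ⟨hBGu, hN⟩ := isUnit_sub_and_l2_opNorm_inv_sub_le hBu hGδ hρ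
  refine ⟨hBGu, ?_⟩
  rw [schur_sub_schur_eq C F K H hB hG hBu hBGu]
  set W := B⁻¹ * C
  have hρ' : 1 - δ * ‖B⁻¹‖ ≠ 0 := by linarith
  calc _ ≤ ‖(B - G)⁻¹‖ * ‖F - G * W‖ ^ 2 + δ * (1 + ‖W‖) ^ 2 :=
        norm_add_le_of_le (l2_opNorm_transpose_mul_mul_le _ _)
          (l2_opNorm_add_quadratic_le W hGδ hFδ hHδ)
    _ ≤ ‖B⁻¹‖ / (1 - δ * ‖B⁻¹‖) * (δ * (1 + ‖W‖)) ^ 2 + δ * (1 + ‖W‖) ^ 2 := by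
        gcongr
        exact l2_opNorm_sub_mul_le W hGδ hFδ
    _ = δ * (1 + ‖W‖) ^ 2 / (1 - δ * ‖B⁻¹‖) := by
        rw [div_mul_eq_mul_div, div_add' _ _ _ hρ', div_left_inj' hρ']
        ring

end Matrix

lemma norm_subm_le {n : ℕ} (M : Matrix (Fin n) (Fin n) ℝ) (I J : Finset (Fin n)) :
    ‖subm M I J‖ ≤ ‖M‖ :=
  M.l2_opNorm_submatrix_le Subtype.val_injective Subtype.val_injective

lemma subm_sub {n : ℕ} (M N : Matrix (Fin n) (Fin n) ℝ) (I J : Finset (Fin n)) :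
    subm (M - N) I J = subm M I J - subm N I J :=
  rfl

lemma transpose_subm_of_isSymm {n : ℕ} {M : Matrix (Fin n) (Fin n) ℝ} (hM : M.IsSymm)
    (I J : Finset (Fin n)) : (subm M I J)ᵀ = subm M J I := by
  rw [subm, transpose_submatrix, hM.eq]
  rfl

theorem stmt11_general {n : ℕ} (A E : Matrix (Fin n) (Fin n) ℝ)
    (hA : A.IsSymm) (hE : E.IsSymm)
    (δ : ℝ) (hEδ : ‖E‖ ≤ δ)
    (I : Finset (Fin n)) (hinv : IsUnit (subm A I I))
    (hρ : δ * ‖(subm A I I)⁻¹‖ < 1) :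
    IsUnit (subm (A - E) I I) ∧
      ‖(subm A Iᶜ Iᶜ - subm A Iᶜ I * (subm A I I)⁻¹ * subm A I Iᶜ)
          - (subm (A - E) Iᶜ Iᶜ
              - subm (A - E) Iᶜ I * (subm (A - E) I I)⁻¹ * subm (A - E) I Iᶜ)‖
        ≤ δ * (1 + ‖(subm A I I)⁻¹ * subm A I Iᶜ‖) ^ 2 / (1 - δ * ‖(subm A I I)⁻¹‖) := by
  have hEδ' (J K : Finset (Fin n)) : ‖subm E J K‖ ≤ δ := (norm_subm_le E J K).trans hEδ
  simp only [subm_sub, ← transpose_subm_of_isSymm hA I Iᶜ, ← transpose_subm_of_isSymm hE I Iᶜ,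
    ← transpose_sub]
  exact isUnit_sub_and_l2_opNorm_schur_sub_schur_le _
    (transpose_subm_of_isSymm hA I I) (transpose_subm_of_isSymm hE I I) hinv
    (hEδ' I I) (hEδ' I Iᶜ) (hEδ' Iᶜ Iᶜ) hρ

/-- let `A`, `E` be symmetric with `Ã = A - E` SPSD and `‖E‖₂ ≤ δ`, let
`A(I,I)` be invertible with `ρ = δ ‖A(I,I)⁻¹‖₂ < 1`, and `W = A(I,I)⁻¹ A(I,Iᶜ)`. Then
`Ã(I,I)` is invertible and the Schur complements `S`, `S̃` of `A(I,I)`, `Ã(I,I)` satisfy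
`‖S - S̃‖₂ ≤ δ (1 + ‖W‖₂)² / (1 - ρ)`. -/
theorem stmt11 {n : ℕ} (A E : Matrix (Fin n) (Fin n) ℝ)
    (hA : A.IsSymm) (hE : E.IsSymm) (hAt : (A - E).PosSemidef)
    (δ : ℝ) (hδ : 0 < δ) (hEδ : ‖E‖ ≤ δ)
    (I : Finset (Fin n)) (hinv : IsUnit (subm A I I))
    (hρ : δ * ‖(subm A I I)⁻¹‖ < 1) :
    IsUnit (subm (A - E) I I) ∧
      ‖(subm A Iᶜ Iᶜ - subm A Iᶜ I * (subm A I I)⁻¹ * subm A I Iᶜ)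
          - (subm (A - E) Iᶜ Iᶜ
              - subm (A - E) Iᶜ I * (subm (A - E) I I)⁻¹ * subm (A - E) I Iᶜ)‖
        ≤ δ * (1 + ‖(subm A I I)⁻¹ * subm A I Iᶜ‖) ^ 2 / (1 - δ * ‖(subm A I I)⁻¹‖) :=
  stmt11_general A E hA hE δ hEδ I hinv hρ
end
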